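/- arXiv:2605.25319 — 6 statements merged into one kernel-verified Lean document; each statement's English description precedes it below -/
import Mathlib

section
/- Let ψ: X → ℝ be a function on a set X, let q: X → ℝ, define φ(x) = max(ψ(x), 0), and let d* = inf{q(x) : x ∈ X, ψ(x) ≤ 0}, which is assumed to be attained. Suppose g: X → ℝ satisfies q(x) − g(x) ≥ d* for all x ∈ X, and suppose there exists a constant c > 0 with ψ(x) ≥ −(1/c)·g(x) for all x ∈ X. Then for any α > c, inf_{x ∈ X} (q(x) + α φ(x)) = d*, and every minimizer of q + α φ over X satisfies ψ(x) ≤ 0. -/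
/-- Abstract exact-penalty theorem: under the exact-penalty hypotheses, for any
`α > c` the penalized problem has optimal value `d*` (attained), and every
minimizer of the penalized objective is feasible (`ψ x ≤ 0`). -/
theorem stmt3 {X : Type*} (q ψ g : X → ℝ) (c dstar : ℝ) (hc : 0 < c)
    (h1 : ∀ x, -(g x) ≤ c * ψ x)
    (h2 : ∀ x, dstar ≤ q x - g x)
    (hatt : ∃ x0, ψ x0 ≤ 0 ∧ q x0 = dstar)
    (hlb : ∀ x, ψ x ≤ 0 → dstar ≤ q x)
    (α : ℝ) (hα : c < α) :
    (∀ x, dstar ≤ q x + α * max (ψ x) 0) ∧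
    (∃ x, q x + α * max (ψ x) 0 = dstar) ∧
    (∀ x, (∀ y, q x + α * max (ψ x) 0 ≤ q y + α * max (ψ y) 0) → ψ x ≤ 0) := by
  obtain ⟨x0, hx0f, hx0q⟩ := hatt
  have key : ∀ x, 0 < ψ x → dstar + (α - c) * ψ x ≤ q x + α * max (ψ x) 0 := by
    intro x hx
    rw [max_eq_left hx.le]
    nlinarith [h1 x, h2 x]
  have lb : ∀ x, dstar ≤ q x + α * max (ψ x) 0 := by
    intro x
    rcases le_or_gt (ψ x) 0 with h | h
    · rw [max_eq_right h]
      linarith [hlb x h]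
    · nlinarith [key x h]
  refine ⟨lb, ⟨x0, by rw [max_eq_right hx0f]; linarith⟩, ?_⟩
  intro x hmin
  by_contra h
  push_neg at h
  have := hmin x0
  rw [max_eq_right hx0f] at this
  nlinarith [key x h]
end

section
/- Let X be a set, q, ψ: X → ℝ, φ = max(ψ, 0), and α > 0. If inf_{x ∈ X}(q + αφ) = inf{q(x): x ∈ X, ψ(x) ≤ 0} =: d*, and if for every x ∈ X with ψ(x) > 0 one has q(x) + αψ(x) > d*, then the set of minimizers of q + αφ over X equals the set of minimizers of q over {x ∈ X : ψ(x) ≤ 0}. -/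
/-- Equality of the optimal solution sets in the exact-penalty reformulation. -/
theorem stmt4 {X : Type*} (q ψ : X → ℝ) (α dstar : ℝ) (hα : 0 < α)
    (hlb1 : ∀ x, dstar ≤ q x + α * max (ψ x) 0)
    (hatt1 : ∃ x, q x + α * max (ψ x) 0 = dstar)
    (hlb2 : ∀ x, ψ x ≤ 0 → dstar ≤ q x)
    (hatt2 : ∃ x, ψ x ≤ 0 ∧ q x = dstar)
    (hstrict : ∀ x, 0 < ψ x → dstar < q x + α * ψ x) :
    {x | ∀ y, q x + α * max (ψ x) 0 ≤ q y + α * max (ψ y) 0}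
      = {x | ψ x ≤ 0 ∧ ∀ y, ψ y ≤ 0 → q x ≤ q y} := by
  ext x
  simp only [Set.mem_setOf_eq]
  constructor
  · intro hx
    obtain ⟨z, hz⟩ := hatt1
    have hval : q x + α * max (ψ x) 0 = dstar :=
      le_antisymm (hz ▸ hx z) (hlb1 x)
    have hψ : ψ x ≤ 0 := by
      by_contra h
      push_neg at h
      have := hstrict x h
      rw [max_eq_left h.le] at hval
      linarith
    have hmax : max (ψ x) 0 = 0 := max_eq_right hψ
    rw [hmax, mul_zero, add_zero] at hval
    refine ⟨hψ, fun y hy => ?_⟩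
    calc q x = dstar := hval
      _ ≤ q y := hlb2 y hy
  · rintro ⟨hψ, hmin⟩
    obtain ⟨z, hz1, hz2⟩ := hatt2
    have hqx : q x = dstar := le_antisymm (hz2 ▸ hmin z hz1) (hlb2 x hψ)
    intro y
    rw [max_eq_right hψ, mul_zero, add_zero, hqx]
    exact hlb1 y
end

section
/- Let ℓᵢ(x) = aᵢ + ⟨hᵢ, x⟩, i = 1,2,3, be affine functions on a real Hilbert space E, let C ⊆ E be nonempty closed convex, x⁰ ∈ E, ρ > 0. Consider the problem min over x ∈ C, r ∈ ℝ of r + (ρ/2)‖x − x⁰‖² subject to ℓᵢ(x) ≤ r for i = 1,2,3. If θ ∈ Δ₃ (the probability simplex in ℝ³) and z = Π_C(x⁰ − (1/ρ)Σᵢ θᵢ hᵢ) satisfy the complementarity condition θᵢ(ℓᵢ(z) − max_j ℓ_j(z)) = 0 for all i, then (z, max_j ℓ_j(z)) is the unique optimal solution in the x-variable of the problem. -/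
/-!
With `s = ∑ θᵢ hᵢ`, the multipliers `θ` give weak duality: `r ≥ M + ⟪s, x - z⟫` for every
feasible `(x, r)`, where `M = maxⱼ ℓⱼ(z)`. The variational inequality of the projection
`z = Π_C(x₀ - ρ⁻¹ s)` gives `ρ/2 ‖x - x₀‖² + ⟪s, x - z⟫ ≥ ρ/2 ‖z - x₀‖² + ρ/2 ‖x - z‖²`.
Adding the two, every feasible objective value exceeds the one at `(z, M)` by at least
`ρ/2 ‖x - z‖²`, which is optimality and uniqueness at once.
-/

open scoped RealInnerProductSpace

section

variable {E : Type*} [NormedAddCommGroup E] [InnerProductSpace ℝ E]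

theorem real_inner_sub_nonpos_of_forall_norm_sub_le {C : Set E} (hC : Convex ℝ C)
    {p z : E} (hz : z ∈ C) (hmin : ∀ w ∈ C, ‖p - z‖ ≤ ‖p - w‖) :
    ∀ w ∈ C, ⟪p - z, w - z⟫ ≤ 0 := by
  have : Nonempty C := ⟨⟨z, hz⟩⟩
  refine (norm_eq_iInf_iff_real_inner_le_zero hC hz).mp (le_antisymm ?_ ?_)
  · exact le_ciInf fun w => hmin w w.2
  · exact ciInf_le ⟨0, fun _ ⟨_, hw⟩ => hw ▸ norm_nonneg _⟩ (⟨z, hz⟩ : C)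

theorem prox_three_point_of_inner_le_zero {ρ : ℝ} (hρ : 0 < ρ) {s x0 x z : E}
    (hvi : ⟪(x0 - ρ⁻¹ • s) - z, x - z⟫ ≤ 0) :
    ρ / 2 * ‖z - x0‖ ^ 2 + ρ / 2 * ‖x - z‖ ^ 2 ≤ ⟪s, x - z⟫ + ρ / 2 * ‖x - x0‖ ^ 2 := by
  have hnorm : ‖x - x0‖ ^ 2 = ‖x - z‖ ^ 2 + 2 * ⟪x - z, z - x0⟫ + ‖z - x0‖ ^ 2 := by
    rw [← norm_add_sq_real, sub_add_sub_cancel]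
  have hs : ⟪s, x - z⟫ = ρ * ⟪x0 - z, x - z⟫ - ρ * ⟪(x0 - ρ⁻¹ • s) - z, x - z⟫ := by
    rw [sub_right_comm, inner_sub_left (x0 - z), real_inner_smul_left, mul_sub, ← mul_assoc,
      mul_inv_cancel₀ hρ.ne', one_mul, sub_sub_cancel]
  have hsymm : ⟪x - z, z - x0⟫ = -⟪x0 - z, x - z⟫ := by
    rw [← neg_sub x0 z, inner_neg_right, real_inner_comm]
  rw [hnorm, hs, hsymm]
  nlinarith [mul_nonneg hρ.le (neg_nonneg.mpr hvi)]

theorem add_inner_sum_smul_le_of_complementary {ι : Type*} [Fintype ι] (a : ι → ℝ) (h : ι → E)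
    {θ : ι → ℝ} (hθ0 : ∀ i, 0 ≤ θ i) (hθ1 : ∑ i, θ i = 1) {z : E} {M : ℝ}
    (hcomp : ∀ i, θ i * ((a i + ⟪h i, z⟫) - M) = 0) {x : E} {r : ℝ}
    (hr : ∀ i, a i + ⟪h i, x⟫ ≤ r) :
    M + ⟪∑ i, θ i • h i, x - z⟫ ≤ r := by
  have hM : ∑ i, θ i * (a i + ⟪h i, z⟫) = M := by
    simp_rw [mul_sub, sub_eq_zero] at hcomp
    rw [Finset.sum_congr rfl fun i _ => hcomp i, ← Finset.sum_mul, hθ1, one_mul]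
  have hsplit : ∑ i, θ i * (a i + ⟪h i, x⟫)
      = ∑ i, θ i * (a i + ⟪h i, z⟫) + ⟪∑ i, θ i • h i, x - z⟫ := by
    simp_rw [sum_inner, real_inner_smul_left, ← Finset.sum_add_distrib, inner_sub_right]
    exact Finset.sum_congr rfl fun i _ => by ring
  calc M + ⟪∑ i, θ i • h i, x - z⟫ = ∑ i, θ i * (a i + ⟪h i, x⟫) := by rw [hsplit, hM]
    _ ≤ ∑ i, θ i * r := Finset.sum_le_sum fun i _ => mul_le_mul_of_nonneg_left (hr i) (hθ0 i)
    _ = r := by rw [← Finset.sum_mul, hθ1, one_mul]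

end

theorem stmt7_general {E : Type*} [NormedAddCommGroup E] [InnerProductSpace ℝ E]
    (C : Set E) (hCcv : Convex ℝ C)
    (a : Fin 3 → ℝ) (h : Fin 3 → E) (x0 : E) (ρ : ℝ) (hρ : 0 < ρ)
    (θ : Fin 3 → ℝ) (hθ0 : ∀ i, 0 ≤ θ i) (hθ1 : ∑ i, θ i = 1)
    (z : E) (hzC : z ∈ C)
    (hproj : ∀ w ∈ C, ‖(x0 - ρ⁻¹ • ∑ i, θ i • h i) - z‖
      ≤ ‖(x0 - ρ⁻¹ • ∑ i, θ i • h i) - w‖)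
    (hcomp : ∀ i, θ i * ((a i + ⟪h i, z⟫)
      - max (max (a 0 + ⟪h 0, z⟫) (a 1 + ⟪h 1, z⟫)) (a 2 + ⟪h 2, z⟫)) = 0) :
    (∀ x ∈ C, ∀ r : ℝ, (∀ i, a i + ⟪h i, x⟫ ≤ r) →
      max (max (a 0 + ⟪h 0, z⟫) (a 1 + ⟪h 1, z⟫)) (a 2 + ⟪h 2, z⟫)
        + ρ / 2 * ‖z - x0‖ ^ 2 ≤ r + ρ / 2 * ‖x - x0‖ ^ 2) ∧
    (∀ x ∈ C, ∀ r : ℝ, (∀ i, a i + ⟪h i, x⟫ ≤ r) →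
      r + ρ / 2 * ‖x - x0‖ ^ 2
        ≤ max (max (a 0 + ⟪h 0, z⟫) (a 1 + ⟪h 1, z⟫)) (a 2 + ⟪h 2, z⟫)
          + ρ / 2 * ‖z - x0‖ ^ 2 → x = z) := by
  set M := max (max (a 0 + ⟪h 0, z⟫) (a 1 + ⟪h 1, z⟫)) (a 2 + ⟪h 2, z⟫)
  have hvi := real_inner_sub_nonpos_of_forall_norm_sub_le hCcv hzC hproj
  have key : ∀ x ∈ C, ∀ r : ℝ, (∀ i, a i + ⟪h i, x⟫ ≤ r) →
      M + ρ / 2 * ‖z - x0‖ ^ 2 + ρ / 2 * ‖x - z‖ ^ 2 ≤ r + ρ / 2 * ‖x - x0‖ ^ 2 :=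
    fun x hx r hr => by
      linarith [prox_three_point_of_inner_le_zero hρ (hvi x hx),
        add_inner_sum_smul_le_of_complementary a h hθ0 hθ1 hcomp hr]
  refine ⟨fun x hx r hr => ?_, fun x hx r hr hle => ?_⟩
  · nlinarith [key x hx r hr, sq_nonneg ‖x - z‖]
  · have hsq : ‖x - z‖ ^ 2 ≤ 0 := by nlinarith [key x hx r hr]
    exact norm_sub_eq_zero_iff.mp <| (pow_eq_zero_iff two_ne_zero).mp <|
      le_antisymm hsq (sq_nonneg _)

/-- KKT certificate for the three-cut proximal subproblem: if `θ` lies in the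
probability simplex, `z` is the projection of `x⁰ - (1/ρ)Σθᵢhᵢ` onto `C`, and the
complementarity condition holds, then `(z, max_j ℓ_j(z))` is optimal and `z` is the
unique optimal `x`-solution. -/
theorem stmt7 {E : Type*} [NormedAddCommGroup E] [InnerProductSpace ℝ E] [CompleteSpace E]
    (C : Set E) (hCne : C.Nonempty) (hCcl : IsClosed C) (hCcv : Convex ℝ C)
    (a : Fin 3 → ℝ) (h : Fin 3 → E) (x0 : E) (ρ : ℝ) (hρ : 0 < ρ)
    (θ : Fin 3 → ℝ) (hθ0 : ∀ i, 0 ≤ θ i) (hθ1 : ∑ i, θ i = 1)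
    (z : E) (hzC : z ∈ C)
    (hproj : ∀ w ∈ C, ‖(x0 - ρ⁻¹ • ∑ i, θ i • h i) - z‖
      ≤ ‖(x0 - ρ⁻¹ • ∑ i, θ i • h i) - w‖)
    (hcomp : ∀ i, θ i * ((a i + ⟪h i, z⟫)
      - max (max (a 0 + ⟪h 0, z⟫) (a 1 + ⟪h 1, z⟫)) (a 2 + ⟪h 2, z⟫)) = 0) :
    (∀ x ∈ C, ∀ r : ℝ, (∀ i, a i + ⟪h i, x⟫ ≤ r) →
      max (max (a 0 + ⟪h 0, z⟫) (a 1 + ⟪h 1, z⟫)) (a 2 + ⟪h 2, z⟫)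
        + ρ / 2 * ‖z - x0‖ ^ 2 ≤ r + ρ / 2 * ‖x - x0‖ ^ 2) ∧
    (∀ x ∈ C, ∀ r : ℝ, (∀ i, a i + ⟪h i, x⟫ ≤ r) →
      r + ρ / 2 * ‖x - x0‖ ^ 2
        ≤ max (max (a 0 + ⟪h 0, z⟫) (a 1 + ⟪h 1, z⟫)) (a 2 + ⟪h 2, z⟫)
          + ρ / 2 * ‖z - x0‖ ^ 2 → x = z) :=
  stmt7_general C hCcv a h x0 ρ hρ θ hθ0 hθ1 z hzC hproj hcomp
end

section
/- With the setup of the epigraph proximal subproblem (three affine cuts ℓᵢ, closed convex set C, center x⁰, ρ > 0): if for some index i the point zᵢ := Π_C(x⁰ − hᵢ/ρ) satisfies ℓᵢ(zᵢ) ≥ ℓⱼ(zᵢ) for all j ≠ i, then zᵢ is the optimal x-solution of the proximal subproblem min_{x∈C, r} { r + (ρ/2)‖x−x⁰‖² : ℓⱼ(x) ≤ r, j=1,2,3 }. -/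
open scoped RealInnerProductSpace

/-- Correctness of Case 1 (vertex) of the proximal subproblem solver: if
`zᵢ = Π_C(x⁰ - hᵢ/ρ)` and the `i`-th cut dominates the others at `zᵢ`, then `zᵢ` is
the optimal `x`-solution of the epigraph proximal subproblem. -/
theorem stmt8 {E : Type*} [NormedAddCommGroup E] [InnerProductSpace ℝ E] [CompleteSpace E]
    (C : Set E) (hCne : C.Nonempty) (hCcl : IsClosed C) (hCcv : Convex ℝ C)
    (a : Fin 3 → ℝ) (h : Fin 3 → E) (x0 : E) (ρ : ℝ) (hρ : 0 < ρ)
    (i : Fin 3) (zi : E) (hziC : zi ∈ C)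
    (hproj : ∀ w ∈ C, ‖(x0 - ρ⁻¹ • h i) - zi‖ ≤ ‖(x0 - ρ⁻¹ • h i) - w‖)
    (hdom : ∀ j, a j + ⟪h j, zi⟫ ≤ a i + ⟪h i, zi⟫) :
    ∀ x ∈ C, ∀ r : ℝ, (∀ j, a j + ⟪h j, x⟫ ≤ r) →
      (a i + ⟪h i, zi⟫) + ρ / 2 * ‖zi - x0‖ ^ 2 ≤ r + ρ / 2 * ‖x - x0‖ ^ 2 := by
  intro x hx r hr
  have key : ‖(x0 - ρ⁻¹ • h i) - zi‖ ^ 2 ≤ ‖(x0 - ρ⁻¹ • h i) - x‖ ^ 2 :=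
    pow_le_pow_left₀ (norm_nonneg _) (hproj x hx) 2
  have e1 : (x0 - ρ⁻¹ • h i) - zi = (x0 - zi) - ρ⁻¹ • h i := sub_right_comm _ _ _
  have e2 : (x0 - ρ⁻¹ • h i) - x = (x0 - x) - ρ⁻¹ • h i := sub_right_comm _ _ _
  have expand : ∀ y : E, ‖(x0 - y) - ρ⁻¹ • h i‖ ^ 2
      = ‖x0 - y‖ ^ 2 - 2 * (ρ⁻¹ * (⟪h i, x0⟫ - ⟪h i, y⟫)) + ρ⁻¹ ^ 2 * ‖h i‖ ^ 2 := by
    intro y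
    rw [@norm_sub_sq_real, real_inner_smul_right, norm_smul, real_inner_comm,
      inner_sub_right]
    simp [mul_pow, abs_of_nonneg (le_of_lt (inv_pos.mpr hρ))]
  rw [e1, e2, expand, expand] at key
  have hzn : ‖zi - x0‖ = ‖x0 - zi‖ := norm_sub_rev _ _
  have hxn : ‖x - x0‖ = ‖x0 - x‖ := norm_sub_rev _ _
  have hri : a i + ⟪h i, x⟫ ≤ r := hr i
  have hρ' : (0:ℝ) < ρ⁻¹ := inv_pos.mpr hρ
  rw [hzn, hxn]
  nlinarith [mul_le_mul_of_nonneg_left key (le_of_lt hρ), mul_inv_cancel₀ hρ.ne']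
end

section
/- Let h₁, h₂ ∈ ℝ^n, x⁰ ∈ ℝ^n, ρ > 0, β > 0, and let Π denote the componentwise projection onto the box [0, β]^n. Define z(s) := Π(x⁰ − (1/ρ)(s h₁ + (1−s) h₂)) for s ∈ [0,1], and φ(s) := (a₁ − a₂) + ⟨h₁ − h₂, z(s)⟩ for constants a₁, a₂ ∈ ℝ. Then φ is continuous, piecewise affine, and nonincreasing on [0,1]. -/
/-!
Each summand of `φ` has the form `d * Π(q - ρ⁻¹ d s)` with `Π = min (max · 0) β` monotone,
so whatever the sign of `d` the summand is nonincreasing in `s`. The clamp `Π` is locally either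
constant or the identity away from `{0, β}`, so a summand is locally affine except where its
argument hits `0` or `β`, which happens at most at two values of `s` unless `d = 0`.
-/

open Filter Topology

def IsLocallyAffineAt (f : ℝ → ℝ) (s : ℝ) : Prop :=
  ∃ m b : ℝ, ∀ᶠ u in 𝓝 s, f u = m * u + b

namespace IsLocallyAffineAt

variable {f g : ℝ → ℝ} {s : ℝ}

theorem of_eventuallyEq_const (c : ℝ) (h : ∀ᶠ u in 𝓝 s, f u = c) : IsLocallyAffineAt f s :=
  ⟨0, c, h.mono fun u hu => by rw [hu]; ring⟩

theorem of_eventuallyEq_id (h : ∀ᶠ u in 𝓝 s, f u = u) : IsLocallyAffineAt f s :=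
  ⟨1, 0, h.mono fun u hu => by rw [hu]; ring⟩

theorem const (c : ℝ) : IsLocallyAffineAt (fun _ => c) s :=
  of_eventuallyEq_const c (Eventually.of_forall fun _ => rfl)

theorem const_mul (hf : IsLocallyAffineAt f s) (c : ℝ) :
    IsLocallyAffineAt (fun u => c * f u) s := by
  obtain ⟨m, b, h⟩ := hf
  exact ⟨c * m, c * b, h.mono fun u hu => by simp only [hu]; ring⟩

theorem add (hf : IsLocallyAffineAt f s) (hg : IsLocallyAffineAt g s) :
    IsLocallyAffineAt (fun u => f u + g u) s := by
  obtain ⟨m, b, hf⟩ := hf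
  obtain ⟨m', b', hg⟩ := hg
  exact ⟨m + m', b + b', (hf.and hg).mono fun u hu => by simp only [hu.1, hu.2]; ring⟩

theorem sum {ι : Type*} (t : Finset ι) {F : ι → ℝ → ℝ}
    (h : ∀ i ∈ t, IsLocallyAffineAt (F i) s) :
    IsLocallyAffineAt (fun u => ∑ i ∈ t, F i u) s := by
  choose! m b hmb using h
  refine ⟨∑ i ∈ t, m i, ∑ i ∈ t, b i,
    ((eventually_all_finset t).2 hmb).mono fun u hu => ?_⟩
  simp only [Finset.sum_congr rfl hu, Finset.sum_add_distrib, Finset.sum_mul]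

theorem comp_sub_mul {q k : ℝ} (hf : IsLocallyAffineAt f (q - k * s)) :
    IsLocallyAffineAt (fun u => f (q - k * u)) s := by
  obtain ⟨m, b, h⟩ := hf
  have hcont : Tendsto (fun u => q - k * u) (𝓝 s) (𝓝 (q - k * s)) :=
    (continuous_const.sub (continuous_const.mul continuous_id)).tendsto s
  exact ⟨-(m * k), m * q + b, (hcont.eventually h).mono fun u hu => by simp only [hu]; ring⟩

end IsLocallyAffineAt

/-- When `k = 0` the composite is constant, so the junk value `(q - c) / 0 = 0` does no harm. -/
theorem isLocallyAffineAt_comp_sub_mul_of_notMem {f : ℝ → ℝ} {S : Finset ℝ}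
    (hf : ∀ x ∉ S, IsLocallyAffineAt f x) (q k : ℝ) {s : ℝ}
    (hs : s ∉ S.image fun c => (q - c) / k) :
    IsLocallyAffineAt (fun u => f (q - k * u)) s := by
  rcases eq_or_ne k 0 with rfl | hk
  · simpa only [zero_mul, sub_zero] using IsLocallyAffineAt.const (f q)
  refine IsLocallyAffineAt.comp_sub_mul (hf _ fun hmem => hs ?_)
  exact Finset.mem_image.2 ⟨_, hmem, by field_simp; ring⟩

theorem isLocallyAffineAt_min_max {β x : ℝ} (h0 : x ≠ 0) (hβ : x ≠ β) :
    IsLocallyAffineAt (fun y => min (max y 0) β) x := by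
  rcases h0.lt_or_gt with hneg | hpos
  · refine .of_eventuallyEq_const (min 0 β) ((eventually_lt_nhds hneg).mono fun y hy => ?_)
    rw [max_eq_right hy.le]
  rcases hβ.lt_or_gt with hlt | hgt
  · refine .of_eventuallyEq_id (((eventually_gt_nhds hpos).and (eventually_lt_nhds hlt)).mono
      fun y hy => ?_)
    rw [max_eq_left hy.1.le, min_eq_left hy.2.le]
  · refine .of_eventuallyEq_const β
      (((eventually_gt_nhds hpos).and (eventually_gt_nhds hgt)).mono fun y hy => ?_)
    rw [max_eq_left hy.1.le, min_eq_right hy.2.le]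

theorem monotone_min_max (β : ℝ) : Monotone fun y : ℝ => min (max y 0) β :=
  fun _ _ h => min_le_min_right β (max_le_max_right 0 h)

theorem antitone_mul_comp_sub_mul {f : ℝ → ℝ} (hf : Monotone f) {c : ℝ} (hc : 0 ≤ c)
    (d q : ℝ) :
    Antitone fun u => d * f (q - c * d * u) := by
  intro u v huv
  rcases le_total 0 d with hd | hd
  · have : c * d * u ≤ c * d * v := mul_le_mul_of_nonneg_left huv (mul_nonneg hc hd)
    exact mul_le_mul_of_nonneg_left (hf (by linarith)) hd
  · have : c * d * v ≤ c * d * u :=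
      mul_le_mul_of_nonpos_left huv (mul_nonpos_of_nonneg_of_nonpos hc hd)
    exact mul_le_mul_of_nonpos_left (hf (by linarith)) hd

theorem stmt9_general (n : ℕ) (h₁ h₂ x0 : Fin n → ℝ) (a₁ a₂ ρ β : ℝ)
    (hρ : 0 < ρ) :
    let z : ℝ → Fin n → ℝ := fun s m =>
      min (max (x0 m - ρ⁻¹ * (s * h₁ m + (1 - s) * h₂ m)) 0) β
    let φ : ℝ → ℝ := fun s => (a₁ - a₂) + ∑ m, (h₁ m - h₂ m) * z s m
    ContinuousOn φ (Set.Icc 0 1) ∧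
    AntitoneOn φ (Set.Icc 0 1) ∧
    ∃ T : Finset ℝ, ∀ s ∈ Set.Icc (0 : ℝ) 1, s ∉ T →
      ∃ m b : ℝ, ∀ᶠ u in nhds s, φ u = m * u + b := by
  intro z φ
  set d : Fin n → ℝ := fun m => h₁ m - h₂ m
  set q : Fin n → ℝ := fun m => x0 m - ρ⁻¹ * h₂ m
  have hφ : φ = fun s =>
      (a₁ - a₂) + ∑ m, d m * min (max (q m - ρ⁻¹ * d m * s) 0) β := by
    funext s
    refine congrArg _ (Finset.sum_congr rfl fun m _ => ?_)
    simp only [z, d, q]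
    ring_nf
  rw [hφ]
  refine ⟨by fun_prop, ?_, ?_⟩
  · have hterm m :=
      antitone_mul_comp_sub_mul (monotone_min_max β) (inv_nonneg.2 hρ.le) (d m) (q m)
    exact fun s _ t _ hst => add_le_add_right (Finset.sum_le_sum fun m _ => hterm m hst) _
  · refine ⟨Finset.univ.biUnion fun m =>
        ({0, β} : Finset ℝ).image fun c => (q m - c) / (ρ⁻¹ * d m),
      fun s _ hs => (IsLocallyAffineAt.const _).add (.sum _ fun m _ => .const_mul ?_ _)⟩
    refine isLocallyAffineAt_comp_sub_mul_of_notMem (f := fun y => min (max y 0) β)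
      (fun x hx => ?_) _ _
      fun hmem => hs (Finset.mem_biUnion.2 ⟨m, Finset.mem_univ m, hmem⟩)
    simp only [Finset.mem_insert, Finset.mem_singleton, not_or] at hx
    exact isLocallyAffineAt_min_max hx.1 hx.2

/-- The edge-sweep function `φ` of Case 2 of the proximal subproblem solver is
continuous, piecewise affine (affine in a neighborhood of every point outside a
finite breakpoint set), and nonincreasing on `[0,1]`. -/
theorem stmt9 (n : ℕ) (h₁ h₂ x0 : Fin n → ℝ) (a₁ a₂ ρ β : ℝ)
    (hρ : 0 < ρ) (hβ : 0 < β) :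
    let z : ℝ → Fin n → ℝ := fun s m =>
      min (max (x0 m - ρ⁻¹ * (s * h₁ m + (1 - s) * h₂ m)) 0) β
    let φ : ℝ → ℝ := fun s => (a₁ - a₂) + ∑ m, (h₁ m - h₂ m) * z s m
    ContinuousOn φ (Set.Icc 0 1) ∧
    AntitoneOn φ (Set.Icc 0 1) ∧
    ∃ T : Finset ℝ, ∀ s ∈ Set.Icc (0 : ℝ) 1, s ∉ T →
      ∃ m b : ℝ, ∀ᶠ u in nhds s, φ u = m * u + b :=
  stmt9_general n h₁ h₂ x0 a₁ a₂ ρ β hρ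
end

section
/- Let f : E → ℝ be convex on a real Hilbert space, C ⊆ E closed convex, and let f̲ : E → ℝ be convex with f̲ ≤ f pointwise. Fix x ∈ C, let z minimize f̲(·) + (ρ/2)‖· − x‖² over C, and define Δ := f(x) − f̲(z). Then Δ ≥ 0, with Δ = 0 implying that x minimizes f over C. -/
/-- The predicted decrease `Δ = f(x) - f̲(z)` of the bundle method is nonnegative;
if in addition the model is tight at the center (`f̲(x) = f(x)`) and `Δ = 0`, then
`x` minimizes `f` over `C`. -/
theorem stmt12 {E : Type*} [NormedAddCommGroup E] [InnerProductSpace ℝ E]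
    [CompleteSpace E]
    (f fl : E → ℝ) (hf : ConvexOn ℝ Set.univ f) (hfl : ConvexOn ℝ Set.univ fl)
    (hle : ∀ y, fl y ≤ f y)
    (C : Set E) (hCcl : IsClosed C) (hCcv : Convex ℝ C)
    (ρ : ℝ) (hρ : 0 < ρ) (x : E) (hxC : x ∈ C) (z : E) (hzC : z ∈ C)
    (hzmin : ∀ y ∈ C, fl z + ρ / 2 * ‖z - x‖ ^ 2 ≤ fl y + ρ / 2 * ‖y - x‖ ^ 2) :
    0 ≤ f x - fl z ∧
    (fl x = f x → f x - fl z = 0 → ∀ y ∈ C, f x ≤ f y) := by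
  have hzx := hzmin x hxC
  simp only [sub_self, norm_zero] at hzx
  have hzx' : fl z + ρ / 2 * ‖z - x‖ ^ 2 ≤ fl x := by simpa using hzx
  have hnn : 0 ≤ ρ / 2 * ‖z - x‖ ^ 2 := by positivity
  have hflz_le : fl z ≤ fl x := by nlinarith
  constructor
  · have := hle x; nlinarith
  · intro htight hΔ y hyC
    have hflzx : fl z = fl x := by
      have := hle x; nlinarith
    have hzero : ρ / 2 * ‖z - x‖ ^ 2 = 0 := by nlinarith
    -- so x itself minimizes fl(·)+ρ/2‖·-x‖² over C
    have hxmin : ∀ w ∈ C, fl x ≤ fl w + ρ / 2 * ‖w - x‖ ^ 2 := by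
      intro w hwC
      have := hzmin w hwC
      nlinarith
    -- show fl x ≤ fl y
    have key : ∀ ε > (0:ℝ), fl x ≤ fl y + ε := by
      intro ε hε
      by_cases hxy : y = x
      · subst hxy; linarith
      have hn : 0 < ‖y - x‖ ^ 2 := by
        have : 0 < ‖y - x‖ := norm_pos_iff.mpr (sub_ne_zero.mpr hxy)
        positivity
      set t : ℝ := min 1 (2 * ε / (ρ * ‖y - x‖ ^ 2)) with ht
      have ht0 : 0 < t := lt_min one_pos (div_pos (by linarith) (mul_pos hρ hn))
      have ht1 : t ≤ 1 := min_le_left _ _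
      have hw : (1 - t) • x + t • y ∈ C := hCcv hxC hyC (by linarith) (le_of_lt ht0) (by ring)
      have hcv := hfl.2 (Set.mem_univ x) (Set.mem_univ y) (by linarith : (0:ℝ) ≤ 1 - t)
        (le_of_lt ht0) (by ring)
      have hmin := hxmin _ hw
      simp only [smul_eq_mul] at hcv
      have hnorm : ‖(1 - t) • x + t • y - x‖ ^ 2 = t ^ 2 * ‖y - x‖ ^ 2 := by
        have : (1 - t) • x + t • y - x = t • (y - x) := by
          rw [smul_sub]; module
        rw [this, norm_smul]
        simp [mul_pow, abs_of_pos ht0]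
      rw [hnorm] at hmin
      -- fl x ≤ (1-t) fl x + t fl y + ρ/2 t² ‖y-x‖²
      have h1 : t * fl x ≤ t * fl y + ρ / 2 * (t ^ 2 * ‖y - x‖ ^ 2) := by nlinarith
      have h2 : fl x ≤ fl y + ρ / 2 * (t * ‖y - x‖ ^ 2) := by
        have := mul_le_mul_of_nonneg_left h1 (le_of_lt (inv_pos.mpr ht0))
        have ht0' : t ≠ 0 := ne_of_gt ht0
        field_simp at this
        nlinarith [this]
      have ht2 : t ≤ 2 * ε / (ρ * ‖y - x‖ ^ 2) := min_le_right _ _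
      have : ρ / 2 * (t * ‖y - x‖ ^ 2) ≤ ε := by
        rw [le_div_iff₀ (mul_pos hρ hn)] at ht2
        nlinarith
      linarith
    have hfl_le : fl x ≤ fl y := le_of_forall_pos_le_add key
    calc f x = fl x := htight.symm
      _ ≤ fl y := hfl_le
      _ ≤ f y := hle y
end
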